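/- arXiv:2406.14577 — 2 statements merged into one kernel-verified Lean document; each statement's English description precedes it below -/
import Mathlib

section
/- Let 0→h→ĝ→g→0 be a non-abelian extension with section s and cocycle (ω,θ,ρ), and let Ker λ = {γ ∈ Aut_h(ĝ) : p∘γ∘s = id_g, γ|_h = id_h}. Then the map K: Ker λ → Z¹_nab(g,h) defined by K(γ)(x) = s(x) − γ(s(x)) is a group isomorphism, where Z¹_nab(g,h) is the abelian group of non-abelian 1-cocycles. -/
universe u v w

/-- A Lie triple system over a field `k`. -/
structure LTS (k : Type u) (V : Type v) [Field k] [AddCommGroup V] [Module k V] where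
  t : V →ₗ[k] V →ₗ[k] V →ₗ[k] V
  alt : ∀ x y, t x x y = 0
  cyc : ∀ x y z, t x y z + t y z x + t z x y = 0
  leib : ∀ a b x y z, t a b (t x y z) =
    t (t a b x) y z + t x (t a b y) z + t x y (t a b z)

/-- `D_θ(x,y) a = θ(y,x) a - θ(x,y) a`. -/
def Dmap {G H : Type*} [AddCommGroup H] (θ : G → G → H → H) (x y : G) (a : H) : H :=
  θ y x a - θ x y a

/-- `D_ρ(x)(a,b) = ρ(x)(b,a) - ρ(x)(a,b)`. -/
def Drho {G H : Type*} [AddCommGroup H] (ρ : G → H → H → H) (x : G) (a b : H) : H :=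
  ρ x b a - ρ x a b

/-- A non-abelian 3-cocycle on `g` with values in `h`: identities (3.2)–(3.14) of the paper,
together with the wedge conditions on `ω`, `θ`, `ρ`. -/
def IsNACocycle {G H : Type*} [AddCommGroup H]
    (tg : G → G → G → G) (th : H → H → H → H)
    (ω : G → G → G → H) (θ : G → G → H → H) (ρ : G → H → H → H) : Prop :=
  (∀ x y, ω x x y = 0) ∧
  (∀ x a, θ x x a = 0) ∧
  (∀ x a, ρ x a a = 0) ∧
  (∀ x y z, ω x y z + ω y z x + ω z x y = 0) ∧
  (∀ x1 x2 y1 y2 y3,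
    Dmap θ x1 x2 (ω y1 y2 y3) + ω x1 x2 (tg y1 y2 y3) =
      ω (tg x1 x2 y1) y2 y3 + θ y2 y3 (ω x1 x2 y1)
      + ω y1 (tg x1 x2 y2) y3 - θ y1 y3 (ω x1 x2 y2)
      + ω y1 y2 (tg x1 x2 y3) + Dmap θ y1 y2 (ω x1 x2 y3)) ∧
  (∀ x y z w a,
    Dmap θ x y (θ z w a) - θ z w (Dmap θ x y a) =
      θ (tg x y z) w a + θ z (tg x y w) a
      - Drho ρ w (ω x y z) a - ρ z a (ω x y w)) ∧
  (∀ x y z w a,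
    θ x (tg y z w) a - ρ x a (ω y z w) =
      θ z w (θ x y a) - θ y w (θ x z a) + Dmap θ y z (θ x w a)) ∧
  (∀ x y z a b,
    Dmap θ x y (ρ z a b) =
      ρ z (Dmap θ x y a) b + ρ (tg x y z) a b + th (ω x y z) a b
      + ρ z a (Dmap θ x y b)) ∧
  (∀ x y z a b,
    Dmap θ y z (ρ x a b) =
      ρ x a (Dmap θ y z b) - ρ z (θ x y a) b + ρ y (θ x z a) b) ∧
  (∀ x y z a b,
    θ y z (ρ x a b) =
      ρ x a (θ y z b) - Drho ρ z (θ x y a) b - ρ y b (θ x z a)) ∧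
  (∀ x y a b c,
    Dmap θ x y (th a b c) =
      th (Dmap θ x y a) b c + th a (Dmap θ x y b) c + th a b (Dmap θ x y c)) ∧
  (∀ x y a b c,
    ρ x a (ρ y b c) =
      ρ y (ρ x a b) c + ρ y b (ρ x a c) - th (θ x y a) b c) ∧
  (∀ x y a b c,
    th a b (θ x y c) =
      θ x y (th a b c) - Drho ρ y (Drho ρ x a b) c - ρ x c (Drho ρ y a b)) ∧
  (∀ x a b c d,
    th a b (ρ x c d) =
      ρ x (th a b c) d - th c (Drho ρ x a b) d + ρ x c (th a b d)) ∧
  (∀ x a b c d,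
    ρ x a (th b c d) =
      th (ρ x a b) c d + th b (ρ x a c) d + th b c (ρ x a d))

/-- The bracket `[x+a, y+b, z+c]_{(ω,θ,ρ)}` on `g ⊕ h`. -/
def nabBr {G H : Type*} [AddCommGroup H]
    (tg : G → G → G → G) (th : H → H → H → H)
    (ω : G → G → G → H) (θ : G → G → H → H) (ρ : G → H → H → H) :
    G × H → G × H → G × H → G × H :=
  fun p q r =>
    (tg p.1 q.1 r.1,
      ω p.1 q.1 r.1 + Dmap θ p.1 q.1 r.2 + θ q.1 r.1 p.2 - θ p.1 r.1 q.2
        + Drho ρ r.1 p.2 q.2 + ρ p.1 q.2 r.2 - ρ q.1 p.2 r.2 + th p.2 q.2 r.2)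

/-- Equivalence of two non-abelian 3-cocycles via `φ : g → h`
(equations (3.15)–(3.17) of the paper). -/
def CocycleEquiv {G H : Type*} [AddCommGroup H]
    (tg : G → G → G → G) (th : H → H → H → H)
    (ω1 : G → G → G → H) (θ1 : G → G → H → H) (ρ1 : G → H → H → H)
    (ω2 : G → G → G → H) (θ2 : G → G → H → H) (ρ2 : G → H → H → H)
    (φ : G → H) : Prop :=
  (∀ x y z,
    ω1 x y z - ω2 x y z =
      θ2 x z (φ y) - Dmap θ2 x y (φ z) + ρ2 x (φ y) (φ z) - θ2 y z (φ x)
        + Drho ρ2 z (φ x) (φ y) - ρ2 y (φ x) (φ z)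
        - th (φ x) (φ y) (φ z) + φ (tg x y z)) ∧
  (∀ x y a,
    θ1 x y a - θ2 x y a =
      ρ2 x a (φ y) - Drho ρ2 y a (φ x) + th a (φ x) (φ y)) ∧
  (∀ x a b, ρ1 x a b - ρ2 x a b = th a (φ x) b)

/-- The operation `i_f(g)` on degree-one cochains (from equations (4.2)–(4.4)). -/
def ibrack {M : Type*} [AddCommGroup M] (f g : M → M → M → M) :
    M → M → M → M → M → M :=
  fun x1 y1 x2 y2 z =>
    f (g x1 y1 x2) y2 z + f x2 (g x1 y1 y2) z
      - (f x1 y1 (g x2 y2 z) - f x2 y2 (g x1 y1 z))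

/-- The graded bracket `[f,g]_{Lts} = (-1)^{1·1} i_f(g) - i_g(f)` of two degree-one cochains. -/
def brLts {M : Type*} [AddCommGroup M] (f g : M → M → M → M) :
    M → M → M → M → M → M :=
  fun x1 y1 x2 y2 z =>
    -(ibrack f g x1 y1 x2 y2 z) - ibrack g f x1 y1 x2 y2 z

/-- Non-abelian 1-cocycles on `g` with values in `h`. -/
def IsZ1 {G H : Type*} [AddCommGroup H]
    (tg : G → G → G → G) (th : H → H → H → H)
    (θ : G → G → H → H) (ρ : G → H → H → H) (φ : G → H) : Prop :=
  (∀ x a b, th a (φ x) b = 0) ∧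
  (∀ x y a, th a (φ x) (φ y) - Drho ρ y a (φ x) + ρ x a (φ y) = 0) ∧
  (∀ x y z,
    Drho ρ z (φ x) (φ y) - ρ y (φ x) (φ z) - θ y z (φ x)
      + ρ x (φ y) (φ z) + θ x z (φ y) - Dmap θ x y (φ z)
      = th (φ x) (φ y) (φ z) - φ (tg x y z))

/-!
An element `γ` of `Ker λ` fixes `i(h) = ker p` pointwise, so decomposing `e = s(p e) + (e - s(p e))`
gives `γ = id - i ∘ φ ∘ p` with `i ∘ φ = s - γ ∘ s`. Conversely, since `p ∘ i = 0`, every such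
shear `id - i ∘ φ ∘ p` is invertible with inverse `id + i ∘ φ ∘ p`, and it fixes `i(h)` and
satisfies `p ∘ γ ∘ s = id`. So everything reduces to deciding when a shear preserves the triple
bracket. Whether a linear map preserves the bracket on a given triple does not change under
permuting the triple (by skew-symmetry and the cyclic identity), preservation on all of `E` is a
trilinear condition, `E` is spanned by `s(g) ∪ i(h)`, and triples from `i(h)` are preserved
since `h` is a subsystem; so it suffices to test the triples `(i a, s x, i b)`,
`(i a, s x, s y)` and `(s x, s y, s z)`, and these three tests are exactly the three identities
defining `Z¹_nab(g,h)`.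
-/

namespace LTS

variable {k E F : Type*} [Field k] [AddCommGroup E] [Module k E] [FunLike F E E] (L : LTS k E)

theorem t_swap (x y z : E) : L.t y x z = -L.t x y z := by
  have h := L.alt (x + y) z
  simp only [map_add, LinearMap.add_apply, L.alt, zero_add, add_zero] at h
  exact eq_neg_of_add_eq_zero_left h

theorem map_t_swap [AddMonoidHomClass F E E] {γ : F} {u v w : E}
    (h : γ (L.t u v w) = L.t (γ u) (γ v) (γ w)) :
    γ (L.t v u w) = L.t (γ v) (γ u) (γ w) := by
  rw [L.t_swap, map_neg, h, L.t_swap (γ u)]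

theorem map_t_cycle [AddMonoidHomClass F E E] {γ : F} {u v w : E}
    (h₁ : γ (L.t u v w) = L.t (γ u) (γ v) (γ w))
    (h₂ : γ (L.t v w u) = L.t (γ v) (γ w) (γ u)) :
    γ (L.t w u v) = L.t (γ w) (γ u) (γ v) := by
  rw [eq_neg_of_add_eq_zero_right (L.cyc u v w), map_neg, map_add, h₁, h₂]
  exact (eq_neg_of_add_eq_zero_right (L.cyc (γ u) (γ v) (γ w))).symm

theorem map_t_of_span_eq_top [LinearMapClass F k E E] {γ : F} {S : Set E}
    (hS : Submodule.span k S = ⊤)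
    (h : ∀ u ∈ S, ∀ v ∈ S, ∀ w ∈ S, γ (L.t u v w) = L.t (γ u) (γ v) (γ w)) (u v w : E) :
    γ (L.t u v w) = L.t (γ u) (γ v) (γ w) := by
  let g : E →ₗ[k] E := γ
  have hg : ⇑g = ⇑γ := rfl
  have key : L.t.compr₂ (LinearMap.llcomp k E E E g) =
      (L.t.compl₁₂ g g).compr₂ (LinearMap.lcomp k E g) :=
    LinearMap.ext_on hS fun u hu => LinearMap.ext_on hS fun v hv =>
      LinearMap.ext_on hS fun w hw => by simpa [hg] using h u hu v hv w hw
  simpa [hg] using LinearMap.congr_fun (LinearMap.congr_fun₂ key u v) w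

end LTS

section Extension

variable {k G H E : Type*} [Field k] [AddCommGroup G] [Module k G] [AddCommGroup H] [Module k H]
  [AddCommGroup E] [Module k E] {i : H →ₗ[k] E} {p : E →ₗ[k] G} {s : G →ₗ[k] E}

theorem Function.Exact.span_range_union_range_eq_top (hip : Function.Exact i p)
    (hs : ∀ x, p (s x) = x) : Submodule.span k (Set.range s ∪ Set.range i) = ⊤ := by
  refine Submodule.eq_top_iff'.mpr fun e => ?_
  obtain ⟨a, ha⟩ := (hip (e - s (p e))).mp (by rw [map_sub, hs, sub_self])
  rw [← sub_add_cancel e (s (p e)), ← ha, add_comm]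
  exact Submodule.add_mem _ (Submodule.subset_span (Or.inl ⟨p e, rfl⟩))
    (Submodule.subset_span (Or.inr ⟨a, rfl⟩))

theorem Function.Exact.exists_comp_eq (hip : Function.Exact i p) (hi : Function.Injective i)
    (f : G →ₗ[k] E) (hf : ∀ x, p (f x) = 0) : ∃ φ : G →ₗ[k] H, ∀ x, i (φ x) = f x := by
  obtain ⟨r, hr⟩ := i.exists_leftInverse_of_injective (LinearMap.ker_eq_bot.mpr hi)
  refine ⟨r ∘ₗ f, fun x => ?_⟩
  obtain ⟨a, ha⟩ := (hip (f x)).mp (hf x)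
  rw [LinearMap.comp_apply, ← ha, ← LinearMap.comp_apply r i, hr, LinearMap.id_apply]

theorem Function.Exact.apply_eq_sub_of_apply_eq (hip : Function.Exact i p)
    (hs : ∀ x, p (s x) = x) {F : Type*} [FunLike F E E] [AddMonoidHomClass F E E] {γ : F}
    (hγ : ∀ a, γ (i a) = i a) (e : E) :
    γ e = e - (s (p e) - γ (s (p e))) := by
  obtain ⟨a, ha⟩ := (hip (e - s (p e))).mp (by rw [map_sub, hs, sub_self])
  have : γ (e - s (p e)) = e - s (p e) := by rw [← ha, hγ]
  rw [map_sub, sub_eq_iff_eq_add] at this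
  rw [this]
  abel

def shear (hpi : p ∘ₗ i = 0) (φ : G →ₗ[k] H) : E ≃ₗ[k] E :=
  LinearEquiv.ofLinearMap (LinearMap.id - i ∘ₗ φ ∘ₗ p) (LinearMap.id + i ∘ₗ φ ∘ₗ p)
    (by ext e; simp [← LinearMap.comp_apply p i, hpi])
    (by ext e; simp [← LinearMap.comp_apply p i, hpi])

theorem shear_apply (hpi : p ∘ₗ i = 0) (φ : G →ₗ[k] H) (e : E) :
    shear hpi φ e = e - i (φ (p e)) := rfl

variable (Lg : LTS k G) (Lh : LTS k H) (LE : LTS k E)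

theorem shear_map_t_i_s_i_iff (ihom : ∀ a b c, i (Lh.t a b c) = LE.t (i a) (i b) (i c))
    (phom : ∀ x y z, p (LE.t x y z) = Lg.t (p x) (p y) (p z)) (hi : Function.Injective i)
    (hpi : p ∘ₗ i = 0) (hs : ∀ x, p (s x) = x) (φ : G →ₗ[k] H) (x : G) (a b : H) :
    shear hpi φ (LE.t (i a) (s x) (i b)) =
        LE.t (shear hpi φ (i a)) (shear hpi φ (s x)) (shear hpi φ (i b)) ↔
      Lh.t a (φ x) b = 0 := by
  have hpi' : ∀ a, p (i a) = 0 := LinearMap.congr_fun hpi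
  rw [← hi.eq_iff, ihom, map_zero]
  simp only [shear_apply, phom, hpi', hs, map_zero, LinearMap.zero_apply, sub_zero, map_sub,
    LinearMap.sub_apply]
  refine eq_iff_eq_of_sub_eq_sub ?_
  abel

theorem shear_map_t_i_s_s_iff (ihom : ∀ a b c, i (Lh.t a b c) = LE.t (i a) (i b) (i c))
    (phom : ∀ x y z, p (LE.t x y z) = Lg.t (p x) (p y) (p z)) (hi : Function.Injective i)
    (hpi : p ∘ₗ i = 0) (hs : ∀ x, p (s x) = x) {ρ : G → H → H → H}
    (hρ : ∀ x a b, i (ρ x a b) = LE.t (s x) (i a) (i b)) (φ : G →ₗ[k] H) (x y : G) (a : H) :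
    shear hpi φ (LE.t (i a) (s x) (s y)) =
        LE.t (shear hpi φ (i a)) (shear hpi φ (s x)) (shear hpi φ (s y)) ↔
      Lh.t a (φ x) (φ y) - Drho ρ y a (φ x) + ρ x a (φ y) = 0 := by
  have hpi' : ∀ a, p (i a) = 0 := LinearMap.congr_fun hpi
  rw [← hi.eq_iff, map_zero]
  simp only [Drho, shear_apply, phom, hpi', hs, ihom, hρ, map_zero, LinearMap.zero_apply, sub_zero,
    map_sub, map_add, LinearMap.sub_apply]
  refine (eq_iff_eq_of_sub_eq_sub ?_).trans eq_comm
  linear_combination (norm := abel1) LE.cyc (i a) (i (φ x)) (s y)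
    + LE.t_swap (i a) (s x) (i (φ y)) - LE.t_swap (i (φ x)) (s y) (i a)

theorem shear_map_t_s_s_s_iff (ihom : ∀ a b c, i (Lh.t a b c) = LE.t (i a) (i b) (i c))
    (phom : ∀ x y z, p (LE.t x y z) = Lg.t (p x) (p y) (p z)) (hi : Function.Injective i)
    (hpi : p ∘ₗ i = 0) (hs : ∀ x, p (s x) = x) {θ : G → G → H → H} {ρ : G → H → H → H}
    (hθ : ∀ x y a, i (θ x y a) = LE.t (i a) (s x) (s y))
    (hρ : ∀ x a b, i (ρ x a b) = LE.t (s x) (i a) (i b)) (φ : G →ₗ[k] H) (x y z : G) :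
    shear hpi φ (LE.t (s x) (s y) (s z)) =
        LE.t (shear hpi φ (s x)) (shear hpi φ (s y)) (shear hpi φ (s z)) ↔
      Drho ρ z (φ x) (φ y) - ρ y (φ x) (φ z) - θ y z (φ x)
        + ρ x (φ y) (φ z) + θ x z (φ y) - Dmap θ x y (φ z)
        = Lh.t (φ x) (φ y) (φ z) - φ (Lg.t x y z) := by
  rw [← hi.eq_iff]
  simp only [Dmap, Drho, shear_apply, phom, hs, ihom, hθ, hρ, map_sub, map_add,
    LinearMap.sub_apply]
  refine (eq_iff_eq_of_sub_eq_sub ?_).trans eq_comm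
  linear_combination (norm := abel1) - LE.t_swap (s y) (i (φ x)) (i (φ z))
        + LE.t_swap (i (φ y)) (s x) (s z) - LE.cyc (i (φ x)) (i (φ y)) (s z)
        + LE.t_swap (i (φ y)) (s z) (i (φ x)) + LE.cyc (i (φ z)) (s x) (s y)
        - LE.t_swap (s y) (i (φ z)) (s x)

theorem shear_map_t_iff_isZ1 (ihom : ∀ a b c, i (Lh.t a b c) = LE.t (i a) (i b) (i c))
    (phom : ∀ x y z, p (LE.t x y z) = Lg.t (p x) (p y) (p z)) (hi : Function.Injective i)
    (hip : Function.Exact i p) (hs : ∀ x, p (s x) = x) {θ : G → G → H → H}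
    {ρ : G → H → H → H} (hθ : ∀ x y a, i (θ x y a) = LE.t (i a) (s x) (s y))
    (hρ : ∀ x a b, i (ρ x a b) = LE.t (s x) (i a) (i b)) (φ : G →ₗ[k] H) :
    (∀ u v w, shear hip.linearMap_comp_eq_zero φ (LE.t u v w) =
        LE.t (shear hip.linearMap_comp_eq_zero φ u) (shear hip.linearMap_comp_eq_zero φ v)
          (shear hip.linearMap_comp_eq_zero φ w)) ↔
      IsZ1 (fun x y z => Lg.t x y z) (fun a b c => Lh.t a b c) θ ρ (fun x => φ x) := by
  have hpi := hip.linearMap_comp_eq_zero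
  have isi := shear_map_t_i_s_i_iff Lg Lh LE ihom phom hi hpi hs φ
  have iss := shear_map_t_i_s_s_iff Lg Lh LE ihom phom hi hpi hs hρ φ
  have sss := shear_map_t_s_s_s_iff Lg Lh LE ihom phom hi hpi hs hθ hρ φ
  refine ⟨fun h => ⟨fun x a b => (isi x a b).mp (h ..), fun x y a => (iss x y a).mp (h ..),
    fun x y z => (sss x y z).mp (h ..)⟩, fun ⟨h₁, h₂, h₃⟩ => ?_⟩
  replace isi x a b := (isi x a b).mpr (h₁ x a b)
  replace iss x y a := (iss x y a).mpr (h₂ x y a)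
  replace sss x y z := (sss x y z).mpr (h₃ x y z)
  refine LE.map_t_of_span_eq_top (hip.span_range_union_range_eq_top hs) ?_
  rintro _ (⟨x, rfl⟩ | ⟨a, rfl⟩) _ (⟨y, rfl⟩ | ⟨b, rfl⟩) _ (⟨z, rfl⟩ | ⟨c, rfl⟩)
  · exact sss x y z
  · exact LE.map_t_cycle (LE.map_t_swap (iss y x c)) (iss x y c)
  · exact LE.map_t_swap (iss x z b)
  · exact LE.map_t_swap (isi x b c)
  · exact iss y z a
  · exact isi y a c
  · exact LE.map_t_cycle (isi z b a) (LE.map_t_swap (isi z a b))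
  · have hpi' : ∀ a, p (i a) = 0 := LinearMap.congr_fun hpi
    simp only [shear_apply, ← ihom, hpi', map_zero, sub_zero]

end Extension

theorem statement18_general {k G H E : Type*} [Field k] [AddCommGroup G] [Module k G]
    [AddCommGroup H] [Module k H] [AddCommGroup E] [Module k E]
    (Lg : LTS k G) (Lh : LTS k H) (LE : LTS k E)
    (i : H →ₗ[k] E) (p : E →ₗ[k] G)
    (ihom : ∀ a b c, i (Lh.t a b c) = LE.t (i a) (i b) (i c))
    (phom : ∀ x y z, p (LE.t x y z) = Lg.t (p x) (p y) (p z))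
    (iinj : Function.Injective i)
    (hexact : LinearMap.range i = LinearMap.ker p)
    (s : G →ₗ[k] E) (hs : ∀ x, p (s x) = x)
    (θ : G → G → H → H) (ρ : G → H → H → H)
    (hθ : ∀ x y a, i (θ x y a) = LE.t (i a) (s x) (s y))
    (hρ : ∀ x a b, i (ρ x a b) = LE.t (s x) (i a) (i b)) :
    -- (a) K is well defined: every `γ ∈ ker λ` gives a non-abelian 1-cocycle
    (∀ γ : E ≃ₗ[k] E,
      (∀ x y z, γ (LE.t x y z) = LE.t (γ x) (γ y) (γ z)) →
      (∀ a, γ (i a) = i a) → (∀ x, p (γ (s x)) = x) →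
      ∃ φ : G →ₗ[k] H, (∀ x, i (φ x) = s x - γ (s x)) ∧
        IsZ1 (fun x y z => Lg.t x y z) (fun a b c => Lh.t a b c) θ ρ (fun x => φ x)) ∧
    -- (b) K is a group homomorphism: `K(γ₁γ₂) = K(γ₁) + K(γ₂)`
    (∀ γ1 γ2 : E ≃ₗ[k] E,
      (∀ x y z, γ1 (LE.t x y z) = LE.t (γ1 x) (γ1 y) (γ1 z)) →
      (∀ x y z, γ2 (LE.t x y z) = LE.t (γ2 x) (γ2 y) (γ2 z)) →
      (∀ a, γ1 (i a) = i a) → (∀ x, p (γ1 (s x)) = x) →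
      (∀ a, γ2 (i a) = i a) → (∀ x, p (γ2 (s x)) = x) →
      ∀ φ1 φ2 : G →ₗ[k] H,
        (∀ x, i (φ1 x) = s x - γ1 (s x)) → (∀ x, i (φ2 x) = s x - γ2 (s x)) →
        ∀ x, i (φ1 x + φ2 x) = s x - γ1 (γ2 (s x))) ∧
    -- (c) K is injective
    (∀ γ : E ≃ₗ[k] E,
      (∀ x y z, γ (LE.t x y z) = LE.t (γ x) (γ y) (γ z)) →
      (∀ a, γ (i a) = i a) → (∀ x, p (γ (s x)) = x) →
      (∀ x, s x - γ (s x) = 0) → ∀ e, γ e = e) ∧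
    -- (d) K is surjective
    (∀ φ : G →ₗ[k] H,
      IsZ1 (fun x y z => Lg.t x y z) (fun a b c => Lh.t a b c) θ ρ (fun x => φ x) →
      ∃ γ : E ≃ₗ[k] E,
        (∀ x y z, γ (LE.t x y z) = LE.t (γ x) (γ y) (γ z)) ∧
        (∀ a, γ (i a) = i a) ∧ (∀ x, p (γ (s x)) = x) ∧
        (∀ x, i (φ x) = s x - γ (s x))) := by
  have hip : Function.Exact i p := LinearMap.exact_iff.mpr hexact.symm
  have hpi := hip.linearMap_comp_eq_zero
  have hpi' : ∀ a, p (i a) = 0 := hip.apply_apply_eq_zero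
  have hZ1 := shear_map_t_iff_isZ1 Lg Lh LE ihom phom iinj hip hs hθ hρ
  refine ⟨fun γ hγt hγi hγp => ?_, fun γ1 γ2 _ _ hγ1i _ _ _ φ1 φ2 h1 h2 x => ?_,
    fun γ _ hγi _ h0 e => ?_, fun φ hφ => ⟨shear hpi φ, (hZ1 φ).mpr hφ, ?_, ?_, ?_⟩⟩
  · obtain ⟨φ, hφ⟩ := hip.exists_comp_eq iinj (s - γ.toLinearMap ∘ₗ s)
      fun x => by simp [hs, hγp]
    have hγ : ∀ e, shear hpi φ e = γ e := fun e => by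
      rw [shear_apply, hφ, hip.apply_eq_sub_of_apply_eq hs hγi e]
      simp
    exact ⟨φ, fun x => by simpa using hφ x, (hZ1 φ).mp fun u v w => by simp only [hγ, hγt]⟩
  · have h2' : γ2 (s x) = s x - i (φ2 x) := by rw [h2, sub_sub_cancel]
    rw [map_add, h1, h2', map_sub, hγ1i]
    abel
  · rw [hip.apply_eq_sub_of_apply_eq hs hγi e, h0, sub_zero]
  · intro a; simp [shear_apply, hpi']
  · intro x; simp [shear_apply, hpi', hs]
  · intro x; simp [shear_apply, hs]

/-- the map `K : ker λ → Z¹_nab(g,h)`, `K(γ)(x) = s x - γ (s x)` (valued in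
`h` via `i`), is a group isomorphism: `K(γ)` is a well-defined non-abelian 1-cocycle,
`K` is additive on composites, injective, and surjective. -/
theorem statement18 {k G H E : Type*} [Field k] [AddCommGroup G] [Module k G]
    [AddCommGroup H] [Module k H] [AddCommGroup E] [Module k E]
    (Lg : LTS k G) (Lh : LTS k H) (LE : LTS k E)
    (i : H →ₗ[k] E) (p : E →ₗ[k] G)
    (ihom : ∀ a b c, i (Lh.t a b c) = LE.t (i a) (i b) (i c))
    (phom : ∀ x y z, p (LE.t x y z) = Lg.t (p x) (p y) (p z))
    (iinj : Function.Injective i) (psurj : Function.Surjective p)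
    (hexact : LinearMap.range i = LinearMap.ker p)
    (s : G →ₗ[k] E) (hs : ∀ x, p (s x) = x)
    (θ : G → G → H → H) (ρ : G → H → H → H)
    (hθ : ∀ x y a, i (θ x y a) = LE.t (i a) (s x) (s y))
    (hρ : ∀ x a b, i (ρ x a b) = LE.t (s x) (i a) (i b)) :
    -- (a) K is well defined: every `γ ∈ ker λ` gives a non-abelian 1-cocycle
    (∀ γ : E ≃ₗ[k] E,
      (∀ x y z, γ (LE.t x y z) = LE.t (γ x) (γ y) (γ z)) →
      (∀ a, γ (i a) = i a) → (∀ x, p (γ (s x)) = x) →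
      ∃ φ : G →ₗ[k] H, (∀ x, i (φ x) = s x - γ (s x)) ∧
        IsZ1 (fun x y z => Lg.t x y z) (fun a b c => Lh.t a b c) θ ρ (fun x => φ x)) ∧
    -- (b) K is a group homomorphism: `K(γ₁γ₂) = K(γ₁) + K(γ₂)`
    (∀ γ1 γ2 : E ≃ₗ[k] E,
      (∀ x y z, γ1 (LE.t x y z) = LE.t (γ1 x) (γ1 y) (γ1 z)) →
      (∀ x y z, γ2 (LE.t x y z) = LE.t (γ2 x) (γ2 y) (γ2 z)) →
      (∀ a, γ1 (i a) = i a) → (∀ x, p (γ1 (s x)) = x) →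
      (∀ a, γ2 (i a) = i a) → (∀ x, p (γ2 (s x)) = x) →
      ∀ φ1 φ2 : G →ₗ[k] H,
        (∀ x, i (φ1 x) = s x - γ1 (s x)) → (∀ x, i (φ2 x) = s x - γ2 (s x)) →
        ∀ x, i (φ1 x + φ2 x) = s x - γ1 (γ2 (s x))) ∧
    -- (c) K is injective
    (∀ γ : E ≃ₗ[k] E,
      (∀ x y z, γ (LE.t x y z) = LE.t (γ x) (γ y) (γ z)) →
      (∀ a, γ (i a) = i a) → (∀ x, p (γ (s x)) = x) →
      (∀ x, s x - γ (s x) = 0) → ∀ e, γ e = e) ∧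
    -- (d) K is surjective
    (∀ φ : G →ₗ[k] H,
      IsZ1 (fun x y z => Lg.t x y z) (fun a b c => Lh.t a b c) θ ρ (fun x => φ x) →
      ∃ γ : E ≃ₗ[k] E,
        (∀ x y z, γ (LE.t x y z) = LE.t (γ x) (γ y) (γ z)) ∧
        (∀ a, γ (i a) = i a) ∧ (∀ x, p (γ (s x)) = x) ∧
        (∀ x, i (φ x) = s x - γ (s x))) :=
  statement18_general Lg Lh LE i p ihom phom iinj hexact s hs θ ρ hθ hρ
end

section
/- Let 0→h→ĝ→g→0 be an abelian extension of Lie triple systems with section s, 3-cocycle ω, and representation (h,θ) of g with θ(x,y)a=[a,s(x),s(y)]. A pair (α,β)∈Aut(g)×Aut(h) is inducible if and only if there exists a linear map φ: g→h such that β(θ(x,y)a) = θ(α(x),α(y))β(a) and βω(x,y,z) − ω(α(x),α(y),α(z)) = θ(α(x),α(z))φ(y) − θ(α(y),α(z))φ(x) − D_θ(α(x),α(y))φ(z) + φ([x,y,z]_g) for all x,y,z ∈ g and a ∈ h. -/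
universe u v w

/-!
The section `s` splits `ĝ` linearly as `g ⊕ h`, and there the bracket reads
`[x + a, y + b, z + c] = [x, y, z] + ω(x, y, z) + θ(y, z) a - θ(x, z) b + D_θ(x, y) c`.
A linear automorphism `γ` with `γ ∘ i = i ∘ β` and `p ∘ γ ∘ s = α` is exactly a triangular map
`x + a ↦ α x + β a - φ x` with `φ : g → h` linear. Writing out `γ [u, v, w] = [γ u, γ v, γ w]` in
the splitting gives an identity affine in `(a, b, c)`: its linear part says that `β` intertwines
`θ`, its constant part is the cocycle relation between `βω` and `ω ∘ α`.
-/

theorem LTS.t_swap_s19 {k V : Type*} [Field k] [AddCommGroup V] [Module k V] (L : LTS k V)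
    (u v w : V) : L.t v u w = -L.t u v w := by
  have h := L.alt (u + v) w
  simp only [map_add, LinearMap.add_apply, L.alt, zero_add, add_zero] at h
  exact eq_neg_of_add_eq_zero_left h

theorem bracket_identity_iff {G H : Type*} [AddCommGroup H] {tg : G → G → G → G}
    {ω : G → G → G → H} {θ : G → G → H → H}
    (hθ_add : ∀ x y a b, θ x y (a + b) = θ x y a + θ x y b)
    (α : G → G) (β : H →+ H) (φ : G → H) :
    (∀ x y z a b c, β (ω x y z + θ y z a - θ x z b + Dmap θ x y c) - φ (tg x y z) =
        ω (α x) (α y) (α z) + θ (α y) (α z) (β a - φ x) - θ (α x) (α z) (β b - φ y)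
          + Dmap θ (α x) (α y) (β c - φ z)) ↔
      (∀ x y a, β (θ x y a) = θ (α x) (α y) (β a)) ∧
      (∀ x y z, β (ω x y z) - ω (α x) (α y) (α z) =
        θ (α x) (α z) (φ y) - θ (α y) (α z) (φ x) - Dmap θ (α x) (α y) (φ z) + φ (tg x y z)) := by
  let Θ : G → G → H →+ H := fun x y => AddMonoidHom.mk' (θ x y) (hθ_add x y)
  have hθ_sub : ∀ x y a b, θ x y (a - b) = θ x y a - θ x y b := fun x y => map_sub (Θ x y)
  have hθ_zero : ∀ x y, θ x y 0 = 0 := fun x y => map_zero (Θ x y)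
  constructor
  · intro h
    refine ⟨fun x y a => ?_, fun x y z => ?_⟩
    · have h₁ := h x x y a 0 0
      have h₀ := h x x y 0 0 0
      simp only [Dmap, map_add, map_sub, map_zero, hθ_sub, hθ_zero] at h₁ h₀
      linear_combination (norm := abel) h₁ - h₀
    · have h₀ := h x y z 0 0 0
      simp only [Dmap, map_add, map_sub, map_zero, hθ_sub, hθ_zero] at h₀ ⊢
      linear_combination (norm := abel) h₀
  · rintro ⟨hcompat, hcocycle⟩ x y z a b c
    have hD : ∀ c, β (Dmap θ x y c) = Dmap θ (α x) (α y) (β c) := by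
      intro c; simp only [Dmap, map_sub, hcompat]
    rw [map_add, map_sub, map_add, hcompat, hcompat, hD]
    have := hcocycle x y z
    simp only [Dmap, hθ_sub] at this ⊢
    linear_combination (norm := abel) this

section AbelianExtension

variable {k G H E : Type*} [Field k] [AddCommGroup G] [Module k G] [AddCommGroup H] [Module k H]
  [AddCommGroup E] [Module k E] {Lg : LTS k G} {LE : LTS k E} {i : H →ₗ[k] E} {p : E →ₗ[k] G}
  {s : G →ₗ[k] E} {ω : G → G → G → H} {θ : G → G → H → H}

theorem theta_add (iinj : Function.Injective i) (hθ : ∀ x y a, i (θ x y a) = LE.t (i a) (s x) (s y))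
    (x y : G) (a b : H) : θ x y (a + b) = θ x y a + θ x y b :=
  iinj <| by simp only [map_add, hθ, LinearMap.add_apply]

theorem t_section_section_incl (hθ : ∀ x y a, i (θ x y a) = LE.t (i a) (s x) (s y))
    (x y : G) (c : H) : LE.t (s x) (s y) (i c) = i (Dmap θ x y c) := by
  have h := LE.cyc (s x) (s y) (i c)
  rw [LE.t_swap_s19 (i c) (s y), ← hθ, ← hθ] at h
  rw [Dmap, map_sub]
  linear_combination (norm := abel) h

theorem t_section_add_incl (hab1 : ∀ (a b : H) (e : E), LE.t (i a) (i b) e = 0)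
    (hab2 : ∀ (e : E) (a b : H), LE.t e (i a) (i b) = 0)
    (hω : ∀ x y z, i (ω x y z) = LE.t (s x) (s y) (s z) - s (Lg.t x y z))
    (hθ : ∀ x y a, i (θ x y a) = LE.t (i a) (s x) (s y)) (x y z : G) (a b c : H) :
    LE.t (s x + i a) (s y + i b) (s z + i c) =
      s (Lg.t x y z) + i (ω x y z + θ y z a - θ x z b + Dmap θ x y c) := by
  have hsis : LE.t (s x) (i b) (s z) = -i (θ x z b) := by rw [LE.t_swap_s19, hθ]
  have hisi : LE.t (i a) (s y) (i c) = 0 := by rw [LE.t_swap_s19, hab2, neg_zero]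
  simp only [map_add, map_sub, LinearMap.add_apply, hω, hθ, hsis, hisi,
    t_section_section_incl hθ, hab1, hab2]
  abel

theorem map_incl_eq_zero (hexact : LinearMap.range i = LinearMap.ker p) (a : H) : p (i a) = 0 :=
  (LinearMap.exact_iff.2 hexact.symm).apply_apply_eq_zero a

theorem bijective_coprod_of_exact (iinj : Function.Injective i)
    (hexact : LinearMap.range i = LinearMap.ker p) (hs : ∀ x, p (s x) = x) :
    Function.Bijective (s.coprod i) := by
  constructor
  · rw [← LinearMap.ker_eq_bot, LinearMap.ker_eq_bot']
    rintro ⟨x, a⟩ h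
    rw [LinearMap.coprod_apply] at h
    obtain rfl : x = 0 := by simpa [hs, map_incl_eq_zero hexact] using congrArg p h
    obtain rfl : a = 0 := iinj (by simpa using h)
    rfl
  · intro e
    obtain ⟨a, ha⟩ : e - s (p e) ∈ LinearMap.range i := by
      rw [hexact, LinearMap.mem_ker, map_sub, hs, sub_self]
    exact ⟨(p e, a), by rw [LinearMap.coprod_apply, ha, add_sub_cancel]⟩

noncomputable def splitting (iinj : Function.Injective i)
    (hexact : LinearMap.range i = LinearMap.ker p) (hs : ∀ x, p (s x) = x) : (G × H) ≃ₗ[k] E :=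
  LinearEquiv.ofBijective (s.coprod i) (bijective_coprod_of_exact iinj hexact hs)

theorem splitting_apply (iinj : Function.Injective i)
    (hexact : LinearMap.range i = LinearMap.ker p) (hs : ∀ x, p (s x) = x) (x : G) (a : H) :
    splitting iinj hexact hs (x, a) = s x + i a :=
  rfl

theorem exists_triangular_of_map_incl (iinj : Function.Injective i)
    (hexact : LinearMap.range i = LinearMap.ker p) (hs : ∀ x, p (s x) = x)
    (γ : E →ₗ[k] E) {α : G → G} {β : H → H}
    (hγi : ∀ a, γ (i a) = i (β a)) (hγs : ∀ x, p (γ (s x)) = α x) :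
    ∃ φ : G →ₗ[k] H, ∀ x a, γ (s x + i a) = s (α x) + i (β a - φ x) := by
  set σ := splitting iinj hexact hs
  refine ⟨-(LinearMap.snd k G H ∘ₗ σ.symm.toLinearMap ∘ₗ γ ∘ₗ s), fun x a => ?_⟩
  obtain ⟨⟨y, b⟩, hyb⟩ := σ.surjective (γ (s x))
  obtain rfl : y = α x := by
    simpa [σ, splitting_apply, hs, map_incl_eq_zero hexact, hγs] using congrArg p hyb
  have hb : (σ.symm (γ (s x))).2 = b := by rw [← hyb, σ.symm_apply_apply]
  rw [map_add, hγi, ← hyb, splitting_apply]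
  simp only [LinearMap.neg_apply, LinearMap.comp_apply, LinearEquiv.coe_coe, LinearMap.snd_apply,
    hb, sub_neg_eq_add, map_add]
  abel

noncomputable def triangularEquiv (iinj : Function.Injective i)
    (hexact : LinearMap.range i = LinearMap.ker p) (hs : ∀ x, p (s x) = x)
    (α : G ≃ₗ[k] G) (β : H ≃ₗ[k] H) (φ : G →ₗ[k] H) : E ≃ₗ[k] E :=
  (splitting iinj hexact hs).symm ≪≫ₗ α.skewProd β (-φ) ≪≫ₗ splitting iinj hexact hs

theorem triangularEquiv_apply (iinj : Function.Injective i)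
    (hexact : LinearMap.range i = LinearMap.ker p) (hs : ∀ x, p (s x) = x)
    (α : G ≃ₗ[k] G) (β : H ≃ₗ[k] H) (φ : G →ₗ[k] H) (x : G) (a : H) :
    triangularEquiv iinj hexact hs α β φ (s x + i a) = s (α x) + i (β a - φ x) := by
  rw [triangularEquiv, ← splitting_apply iinj hexact hs, LinearEquiv.trans_apply,
    LinearEquiv.trans_apply, LinearEquiv.symm_apply_apply, LinearEquiv.skewProd_apply,
    splitting_apply, LinearMap.neg_apply, ← sub_eq_add_neg]

theorem map_t_iff_of_triangular (iinj : Function.Injective i)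
    (hexact : LinearMap.range i = LinearMap.ker p) (hs : ∀ x, p (s x) = x)
    (hab1 : ∀ (a b : H) (e : E), LE.t (i a) (i b) e = 0)
    (hab2 : ∀ (e : E) (a b : H), LE.t e (i a) (i b) = 0)
    (hω : ∀ x y z, i (ω x y z) = LE.t (s x) (s y) (s z) - s (Lg.t x y z))
    (hθ : ∀ x y a, i (θ x y a) = LE.t (i a) (s x) (s y))
    {α : G → G} (αhom : ∀ x y z, α (Lg.t x y z) = Lg.t (α x) (α y) (α z))
    {β : H →+ H} {φ : G → H} {f : E → E} (hf : ∀ x a, f (s x + i a) = s (α x) + i (β a - φ x)) :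
    (∀ e₁ e₂ e₃, f (LE.t e₁ e₂ e₃) = LE.t (f e₁) (f e₂) (f e₃)) ↔
      (∀ x y a, β (θ x y a) = θ (α x) (α y) (β a)) ∧
      (∀ x y z, β (ω x y z) - ω (α x) (α y) (α z) =
        θ (α x) (α z) (φ y) - θ (α y) (α z) (φ x) - Dmap θ (α x) (α y) (φ z) +
          φ (Lg.t x y z)) := by
  rw [← bracket_identity_iff (theta_add iinj hθ)]
  have hsplit := t_section_add_incl hab1 hab2 hω hθ
  have hcancel : ∀ u a b, s u + i a = s u + i b ↔ a = b := fun u a b => by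
    rw [add_right_inj, iinj.eq_iff]
  have hhom : ∀ x y z a b c, f (LE.t (s x + i a) (s y + i b) (s z + i c)) =
      LE.t (f (s x + i a)) (f (s y + i b)) (f (s z + i c)) ↔
      β (ω x y z + θ y z a - θ x z b + Dmap θ x y c) - φ (Lg.t x y z) =
        ω (α x) (α y) (α z) + θ (α y) (α z) (β a - φ x) - θ (α x) (α z) (β b - φ y) +
          Dmap θ (α x) (α y) (β c - φ z) := by
    intro x y z a b c
    rw [hsplit, hf, hf, hf, hf, hsplit, αhom, hcancel]
  have hsurj := (bijective_coprod_of_exact iinj hexact hs).2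
  constructor
  · intro h x y z a b c
    exact (hhom x y z a b c).1 (h _ _ _)
  · intro h e₁ e₂ e₃
    obtain ⟨⟨x, a⟩, rfl⟩ := hsurj e₁
    obtain ⟨⟨y, b⟩, rfl⟩ := hsurj e₂
    obtain ⟨⟨z, c⟩, rfl⟩ := hsurj e₃
    exact (hhom x y z a b c).2 (h x y z a b c)

end AbelianExtension

theorem statement19_general {k G H E : Type*} [Field k] [AddCommGroup G] [Module k G]
    [AddCommGroup H] [Module k H] [AddCommGroup E] [Module k E]
    (Lg : LTS k G) (LE : LTS k E)
    (i : H →ₗ[k] E) (p : E →ₗ[k] G)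
    (iinj : Function.Injective i)
    (hexact : LinearMap.range i = LinearMap.ker p)
    -- `h` is an abelian ideal of `ĝ`
    (hab1 : ∀ (a b : H) (e : E), LE.t (i a) (i b) e = 0)
    (hab2 : ∀ (e : E) (a b : H), LE.t e (i a) (i b) = 0)
    (s : G →ₗ[k] E) (hs : ∀ x, p (s x) = x)
    (ω : G → G → G → H) (θ : G → G → H → H)
    (hω : ∀ x y z, i (ω x y z) = LE.t (s x) (s y) (s z) - s (Lg.t x y z))
    (hθ : ∀ x y a, i (θ x y a) = LE.t (i a) (s x) (s y))
    (α : G ≃ₗ[k] G) (β : H ≃ₗ[k] H)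
    (αhom : ∀ x y z, α (Lg.t x y z) = Lg.t (α x) (α y) (α z)) :
    (∃ γ : E ≃ₗ[k] E,
      (∀ x y z, γ (LE.t x y z) = LE.t (γ x) (γ y) (γ z)) ∧
      (∀ a, γ (i a) = i (β a)) ∧
      (∀ x, p (γ (s x)) = α x)) ↔
    (∃ φ : G →ₗ[k] H,
      (∀ x y a, β (θ x y a) = θ (α x) (α y) (β a)) ∧
      (∀ x y z,
        β (ω x y z) - ω (α x) (α y) (α z) =
          θ (α x) (α z) (φ y) - θ (α y) (α z) (φ x)
            - Dmap θ (α x) (α y) (φ z) + φ (Lg.t x y z))) := by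
  constructor
  · rintro ⟨γ, hγ, hγi, hγs⟩
    obtain ⟨φ, hφ⟩ := exists_triangular_of_map_incl iinj hexact hs γ.toLinearMap hγi hγs
    exact ⟨φ, (map_t_iff_of_triangular (β := β.toLinearMap.toAddMonoidHom)
      iinj hexact hs hab1 hab2 hω hθ αhom hφ).1 hγ⟩
  · rintro ⟨φ, hφ⟩
    have hγ := triangularEquiv_apply iinj hexact hs α β φ
    refine ⟨triangularEquiv iinj hexact hs α β φ, (map_t_iff_of_triangular
      (β := β.toLinearMap.toAddMonoidHom) iinj hexact hs hab1 hab2 hω hθ αhom hγ).2 hφ,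
      fun a => ?_, fun x => ?_⟩
    · simpa using hγ 0 a
    · simpa [hs, map_incl_eq_zero hexact] using congrArg p (hγ x 0)

/-- for an abelian extension `0 → h → ĝ → g → 0` with section `s`, 3-cocycle
`ω` and representation `(h,θ)` (with `θ(x,y)a = [a, s x, s y]`), a pair
`(α,β) ∈ Aut(g) × Aut(h)` is inducible if and only if there is a linear `φ : g → h` with
`β(θ(x,y)a) = θ(αx,αy)(βa)` and
`βω(x,y,z) − ω(αx,αy,αz) = θ(αx,αz)φ(y) − θ(αy,αz)φ(x) − D_θ(αx,αy)φ(z) + φ([x,y,z]_g)`. -/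
theorem statement19 {k G H E : Type*} [Field k] [AddCommGroup G] [Module k G]
    [AddCommGroup H] [Module k H] [AddCommGroup E] [Module k E]
    (Lg : LTS k G) (Lh : LTS k H) (LE : LTS k E)
    (i : H →ₗ[k] E) (p : E →ₗ[k] G)
    (ihom : ∀ a b c, i (Lh.t a b c) = LE.t (i a) (i b) (i c))
    (phom : ∀ x y z, p (LE.t x y z) = Lg.t (p x) (p y) (p z))
    (iinj : Function.Injective i) (psurj : Function.Surjective p)
    (hexact : LinearMap.range i = LinearMap.ker p)
    -- `h` is an abelian ideal of `ĝ`
    (hab1 : ∀ (a b : H) (e : E), LE.t (i a) (i b) e = 0)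
    (hab2 : ∀ (e : E) (a b : H), LE.t e (i a) (i b) = 0)
    (s : G →ₗ[k] E) (hs : ∀ x, p (s x) = x)
    (ω : G → G → G → H) (θ : G → G → H → H)
    (hω : ∀ x y z, i (ω x y z) = LE.t (s x) (s y) (s z) - s (Lg.t x y z))
    (hθ : ∀ x y a, i (θ x y a) = LE.t (i a) (s x) (s y))
    (α : G ≃ₗ[k] G) (β : H ≃ₗ[k] H)
    (αhom : ∀ x y z, α (Lg.t x y z) = Lg.t (α x) (α y) (α z))
    (βhom : ∀ a b c, β (Lh.t a b c) = Lh.t (β a) (β b) (β c)) :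
    (∃ γ : E ≃ₗ[k] E,
      (∀ x y z, γ (LE.t x y z) = LE.t (γ x) (γ y) (γ z)) ∧
      (∀ a, γ (i a) = i (β a)) ∧
      (∀ x, p (γ (s x)) = α x)) ↔
    (∃ φ : G →ₗ[k] H,
      (∀ x y a, β (θ x y a) = θ (α x) (α y) (β a)) ∧
      (∀ x y z,
        β (ω x y z) - ω (α x) (α y) (α z) =
          θ (α x) (α z) (φ y) - θ (α y) (α z) (φ x)
            - Dmap θ (α x) (α y) (φ z) + φ (Lg.t x y z))) :=
  statement19_general Lg LE i p iinj hexact hab1 hab2 s hs ω θ hω hθ α β αhom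
end
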